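/- Let V be a set of valuations, let KB be a finite collection of subsets of V, and let A ⊆ V be a nonempty set. Suppose H is a collection of subsets of V such that H ∩ X ≠ ∅ for every kernel X of KB with respect to A. Then (⋂ (KB \ H)) ∩ A ≠ ∅, i.e., the family obtained from KB by removing the members of H is consistent with A. -/

import Mathlib

/-!
Were `⋂₀ (KB \ H) ∩ A` empty, the finite collection `KB \ H` would be inconsistent with `A`, so a
minimal inconsistent subcollection of it would be a kernel of `KB` disjoint from `H`.
-/

/-- `X` is a kernel of the collection `KB` with respect to `A`: `X` is a
subcollection of `KB` whose intersection is inconsistent with `A`, while the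
intersection of every proper subcollection of `X` is consistent with `A`.
(Here `⋂₀ ∅ = Set.univ`, so the empty collection is consistent with any
nonempty `A`.) -/
def IsKernel {V : Type*} (KB : Set (Set V)) (A : Set V) (X : Set (Set V)) : Prop :=
  X ⊆ KB ∧ (⋂₀ X) ∩ A = ∅ ∧ ∀ Y ⊂ X, (⋂₀ Y) ∩ A ≠ ∅

theorem exists_isKernel_subset {V : Type*} {KB X : Set (Set V)} {A : Set V} (hX : X.Finite)
    (hXKB : X ⊆ KB) (hXA : ⋂₀ X ∩ A = ∅) : ∃ K ⊆ X, IsKernel KB A K := by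
  set S : Set (Set (Set V)) := {Y | Y ⊆ X ∧ ⋂₀ Y ∩ A = ∅}
  have hS : S.Finite := hX.finite_subsets.subset fun _ hY => hY.1
  obtain ⟨K, hKX, hKmin⟩ := hS.isPWO.exists_le_minimal (a := X) ⟨subset_rfl, hXA⟩
  refine ⟨K, hKX, hKX.trans hXKB, hKmin.prop.2, fun Y hYK hYA => ?_⟩
  exact hYK.2 (hKmin.le_of_le ⟨hYK.1.trans hKX, hYA⟩ hYK.1)

theorem remove_hitting_set_consistent_general {V : Type*} (KB : Set (Set V))
    (hKB : KB.Finite) (A : Set V) (H : Set (Set V))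
    (hhit : ∀ X, IsKernel KB A X → (H ∩ X).Nonempty) :
    (⋂₀ (KB \ H)) ∩ A ≠ ∅ := by
  intro hinc
  obtain ⟨K, hK, hKker⟩ := exists_isKernel_subset (hKB.sdiff (t := H)) Set.sdiff_subset hinc
  obtain ⟨h, hH, hhK⟩ := hhit K hKker
  exact (hK hhK).2 hH

theorem remove_hitting_set_consistent {V : Type*} (KB : Set (Set V))
    (hKB : KB.Finite) (A : Set V) (hA : A.Nonempty) (H : Set (Set V))
    (hhit : ∀ X, IsKernel KB A X → (H ∩ X).Nonempty) :
    (⋂₀ (KB \ H)) ∩ A ≠ ∅ :=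
  remove_hitting_set_consistent_general KB hKB A H hhit
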